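/- Let V be a real symmetric 2n×2n matrix with V + iΩ ≻ 0 and let M be a principal square-root matrix for V. Then M V = V Mᵀ; equivalently, the matrix (M + I)V is symmetric. (This is the symmetry of the covariance matrix V_{√σ} = (√(I + (VΩ)^{-2}) + I)V of the square root of a Gaussian state.) -/

import Mathlib

noncomputable section
open Matrix
open scoped ComplexOrder

/-- The standard `2n × 2n` symplectic form matrix `Ω = [[0, I], [-I, 0]]`. -/
def Om (n : ℕ) : Matrix (Fin n ⊕ Fin n) (Fin n ⊕ Fin n) ℝ :=
  Matrix.fromBlocks 0 1 (-1) 0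

/-- Complexification of a real matrix. -/
def cm {k l : Type*} (A : Matrix k l ℝ) : Matrix k l ℂ := A.map Complex.ofReal

/-!
With `W = VΩ`, symmetry of `V` and antisymmetry of `Ω` give `W V = -V Wᵀ`. The same relation
holds for `W⁻¹` (trivially when `W` is singular, since then `W⁻¹ = 0`), and squaring it gives
`M² V = V (Mᵀ)²`. Hence `X = M V - V Mᵀ` solves the Sylvester equation `M X = X (-Mᵀ)`; as the
spectra of `M` and `-Mᵀ` lie in opposite open half-planes, `aeval (-Mᵀ) M.charpoly` is invertible
while `X * aeval (-Mᵀ) M.charpoly = aeval M M.charpoly * X = 0`, so `X = 0`.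
-/

open Polynomial

theorem Polynomial.aeval_mul_eq_mul_aeval {R A : Type*} [CommSemiring R] [Semiring A]
    [Algebra R A] {a b x : A} (h : a * x = x * b) (p : R[X]) :
    aeval a p * x = x * aeval b p := by
  induction p using Polynomial.induction_on' with
  | add p q hp hq => rw [map_add, map_add, add_mul, mul_add, hp, hq]
  | monomial k r =>
    have hk : a ^ k * x = x * b ^ k := (SemiconjBy.pow_right h.symm k).symm
    rw [aeval_monomial, aeval_monomial, ← Algebra.smul_def, ← Algebra.smul_def, smul_mul_assoc,
      hk, mul_smul_comm]

namespace Matrix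

section Field

variable {m K : Type*} [Fintype m] [DecidableEq m] [Field K]

theorem spectrum_transpose (A : Matrix m m K) : spectrum K Aᵀ = spectrum K A := by
  ext k
  simp only [mem_spectrum_iff_isRoot_charpoly, charpoly_transpose]

variable [IsAlgClosed K]

theorem isUnit_aeval_charpoly_of_disjoint_spectrum {A B : Matrix m m K}
    (hAB : Disjoint (spectrum K A) (spectrum K B)) : IsUnit (aeval B A.charpoly) := by
  by_contra hB
  rw [(IsAlgClosed.splits _).eq_prod_roots_of_monic A.charpoly_monic] at hB
  obtain ⟨k, hkB, hkA⟩ := spectrum.exists_mem_of_not_isUnit_aeval_prod hB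
  exact hAB.ne_of_mem (mem_spectrum_iff_isRoot_charpoly.2 hkA) hkB rfl

theorem eq_zero_of_mul_eq_mul_of_disjoint_spectrum {A B X : Matrix m m K}
    (hAB : Disjoint (spectrum K A) (spectrum K B)) (h : A * X = X * B) : X = 0 := by
  have hX : X * aeval B A.charpoly = 0 := by
    rw [← aeval_mul_eq_mul_aeval h, aeval_self_charpoly, zero_mul]
  exact (isUnit_aeval_charpoly_of_disjoint_spectrum hAB).mul_left_eq_zero.1 hX

theorem mul_eq_mul_transpose_of_sq_mul_eq {A V : Matrix m m K}
    (hA : Disjoint (spectrum K A) (-spectrum K A)) (h : A ^ 2 * V = V * Aᵀ ^ 2) :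
    A * V = V * Aᵀ := by
  refine sub_eq_zero.1 (eq_zero_of_mul_eq_mul_of_disjoint_spectrum (A := A) (B := -Aᵀ) ?_ ?_)
  · rwa [← transpose_neg, spectrum_transpose, ← spectrum.neg_eq]
  · rw [sq, sq] at h
    simp only [mul_sub, sub_mul, mul_neg, ← Matrix.mul_assoc, h]
    abel

end Field

section CommRing

variable {m R : Type*} [Fintype m] [DecidableEq m] [CommRing R]

theorem inv_mul_eq_neg_mul_inv_transpose {W V : Matrix m m R} (h : W * V = -(V * Wᵀ)) :
    W⁻¹ * V = -(V * W⁻¹ᵀ) := by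
  by_cases hW : IsUnit W.det
  · have hWT : IsUnit Wᵀ.det := by rwa [det_transpose]
    have h' : V * Wᵀ = -(W * V) := by rw [h, neg_neg]
    calc W⁻¹ * V = W⁻¹ * (V * Wᵀ) * Wᵀ⁻¹ := by
          rw [Matrix.mul_assoc, Matrix.mul_assoc, mul_nonsing_inv _ hWT, mul_one]
      _ = -(V * W⁻¹ᵀ) := by
          rw [h', mul_neg, ← Matrix.mul_assoc, nonsing_inv_mul _ hW, one_mul, neg_mul,
            transpose_nonsing_inv]
  · rw [nonsing_inv_apply_not_isUnit _ hW, transpose_zero, zero_mul, mul_zero, neg_zero]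

theorem sq_mul_eq_mul_transpose_sq_of_mul_eq_neg {W V : Matrix m m R} (h : W * V = -(V * Wᵀ)) :
    W ^ 2 * V = V * Wᵀ ^ 2 := by
  rw [sq, sq, Matrix.mul_assoc, h, mul_neg, ← Matrix.mul_assoc, h, neg_mul, neg_neg,
    Matrix.mul_assoc]

end CommRing

end Matrix

theorem Om_transpose (n : ℕ) : (Om n)ᵀ = -Om n := by
  rw [Om, fromBlocks_transpose, fromBlocks_neg]
  simp

section Complexification

variable {m : Type*} [Fintype m] [DecidableEq m]

theorem cm_injective {k l : Type*} : Function.Injective (cm : Matrix k l ℝ → Matrix k l ℂ) :=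
  map_injective Complex.ofReal_injective

theorem cm_transpose {k l : Type*} (A : Matrix k l ℝ) : cm Aᵀ = (cm A)ᵀ := rfl

theorem cm_mul (A B : Matrix m m ℝ) : cm (A * B) = cm A * cm B :=
  map_mul Complex.ofRealHom.mapMatrix A B

theorem cm_pow (A : Matrix m m ℝ) (k : ℕ) : cm (A ^ k) = cm A ^ k :=
  map_pow Complex.ofRealHom.mapMatrix A k

end Complexification

theorem principal_sqrt_symm_general (n : ℕ)
    (V M : Matrix (Fin n ⊕ Fin n) (Fin n ⊕ Fin n) ℝ)
    (hV : V.IsSymm)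
    (hM2 : M * M = 1 + ((V * Om n)⁻¹) ^ 2)
    (hMeig : ∀ μ : ℂ, (cm M).charpoly.IsRoot μ → μ.im = 0 ∧ 0 < μ.re) :
    M * V = V * Mᵀ ∧ ((M + 1) * V).IsSymm := by
  have hanti : V * Om n * V = -(V * (V * Om n)ᵀ) := by
    rw [transpose_mul, Om_transpose, hV.eq, neg_mul, mul_neg, neg_neg, Matrix.mul_assoc]
  have hinv_sq :=
    sq_mul_eq_mul_transpose_sq_of_mul_eq_neg (inv_mul_eq_neg_mul_inv_transpose hanti)
  have hsq : M ^ 2 * V = V * Mᵀ ^ 2 := by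
    rw [← transpose_pow, sq, hM2, add_mul, one_mul, hinv_sq, transpose_add, transpose_one,
      transpose_pow, mul_add, mul_one]
  have hspec : Disjoint (spectrum ℂ (cm M)) (-spectrum ℂ (cm M)) := by
    refine Set.disjoint_left.2 fun z hz hnz => ?_
    have hre := (hMeig z (mem_spectrum_iff_isRoot_charpoly.1 hz)).2
    have hnre := (hMeig (-z) (mem_spectrum_iff_isRoot_charpoly.1 hnz)).2
    rw [Complex.neg_re] at hnre
    linarith
  have hMV : M * V = V * Mᵀ := by
    have hsq' : cm M ^ 2 * cm V = cm V * (cm M)ᵀ ^ 2 := by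
      simpa only [cm_mul, cm_pow, cm_transpose] using congrArg cm hsq
    apply cm_injective
    rw [cm_mul, cm_mul, cm_transpose]
    exact mul_eq_mul_transpose_of_sq_mul_eq hspec hsq'
  refine ⟨hMV, ?_⟩
  rw [IsSymm, transpose_mul, transpose_add, transpose_one, hV.eq, mul_add, mul_one, ← hMV,
    add_mul, one_mul]

/-- If `V` is real symmetric with `V + iΩ ≻ 0` and `M` is a principal square-root matrix for `V`
(`M` real, `M² = I + (VΩ)⁻²`, `M` commutes with `VΩ`, all complex eigenvalues of `M` positive
real), then `M V = V Mᵀ`; equivalently, `(M + I) V` is symmetric. -/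
theorem principal_sqrt_symm (n : ℕ)
    (V M : Matrix (Fin n ⊕ Fin n) (Fin n ⊕ Fin n) ℝ)
    (hV : V.IsSymm)
    (hVpd : (cm V + Complex.I • cm (Om n)).PosDef)
    (hM2 : M * M = 1 + ((V * Om n)⁻¹) ^ 2)
    (hMcomm : M * (V * Om n) = (V * Om n) * M)
    (hMeig : ∀ μ : ℂ, (cm M).charpoly.IsRoot μ → μ.im = 0 ∧ 0 < μ.re) :
    M * V = V * Mᵀ ∧ ((M + 1) * V).IsSymm :=
  principal_sqrt_symm_general n V M hV hM2 hMeig
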